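/- For integers k ≥ 1 and 0 ≤ i ≤ k define Q̃_{k,i}(t) = (1/2)·C(2k,2i)·(1+t)^{2k−2i} + (1/2)·Σ_{j=i}^{k} C(2k,2j)·(1−t)^{2k−2j}·C(j,i)·(−4t)^{j−i}. Then for all integers 0 ≤ i ≤ k and all real t, (1+i)(1+k)·Q̃_{k+2,i+1}(t) = (1+i)(2+k)·(1+t)²·Q̃_{k+1,i+1}(t) + (2+k)(2+2k−i)·Q̃_{k+1,i}(t). -/

import Mathlib

/-!
Put `x = (1 + t)²`, `y = 0` or `x = (1 - t)²`, `y = -4t`: in both cases `x - y = (1 + t)²`, and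
`2 Q̃_{n,i}(t)` is the sum of the two specialisations of the homogeneous polynomial
`T_{n,i}(x, y) = ∑ⱼ C(2n, 2j) C(j, i) x^(n-j) y^(j-i)`.
So it suffices to prove the recurrence for `T` with `(1 + t)²` replaced by `x - y`. Comparing the
coefficients of `x^(k+1-m) y^(m-i)` reduces this to an identity between products of binomial
coefficients, which follows by expressing all of them through `C(2k+2, 2m)` and `C(m, i)`.
-/

open Finset

/-- The polynomial `Q̃_{k,i}(t)` : the `ρ* = 0` variant of `Q_{k,i}`. -/
noncomputable def Qtilde (k i : ℕ) (t : ℝ) : ℝ :=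
  (1/2) * ((2*k).choose (2*i) : ℝ) * (1+t)^(2*k-2*i)
    + (1/2) * ∑ j ∈ Finset.Icc i k,
        ((2*k).choose (2*j) : ℝ) * (1-t)^(2*k-2*j) * (j.choose i : ℝ) * (-4*t)^(j-i)

theorem Nat.cast_choose_succ_right_eq {R : Type*} [Ring R] (n j : ℕ) :
    (n.choose (j + 1) : R) * (j + 1) = n.choose j * (n - j) := by
  rcases le_or_gt j n with hjn | hnj
  · have h := congrArg (Nat.cast (R := R)) (Nat.choose_succ_right_eq n j)
    push_cast [Nat.cast_sub hjn] at h
    exact h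
  · simp [Nat.choose_eq_zero_of_lt hnj, Nat.choose_eq_zero_of_lt (Nat.lt_succ_of_lt hnj)]

theorem choose_mul_choose_recurrence (k i m : ℕ) :
    ((i : ℤ) + 1) * (k + 1) * ((2 * (k + 2)).choose (2 * (m + 1)) * (m + 1).choose (i + 1))
      + ((i : ℤ) + 1) * (k + 2) * ((2 * (k + 1)).choose (2 * m) * m.choose (i + 1))
    = ((i : ℤ) + 1) * (k + 2) * ((2 * (k + 1)).choose (2 * (m + 1)) * (m + 1).choose (i + 1))
      + ((k : ℤ) + 2) * (2 * k + 2 - i) * ((2 * (k + 1)).choose (2 * m) * m.choose i) := by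
  have h1 : ((2 * (k + 2)).choose (2 * (m + 1)) : ℤ) * ((2 * m + 2) * (2 * m + 1))
      = ((2 * (k + 1)).choose (2 * m) : ℤ) * ((2 * k + 4) * (2 * k + 3)) := by
    have a1 := Nat.add_one_mul_choose_eq (2 * (k + 1)) (2 * m)
    have a2 := Nat.add_one_mul_choose_eq (2 * (k + 1) + 1) (2 * m + 1)
    rw [show 2 * (k + 1) + 1 + 1 = 2 * (k + 2) by ring,
      show 2 * m + 1 + 1 = 2 * (m + 1) by ring] at a2
    zify at a1 a2
    linear_combination (-(2 * (m : ℤ) + 1)) * a2 - (2 * (k : ℤ) + 4) * a1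
  have h2 : ((2 * (k + 1)).choose (2 * (m + 1)) : ℤ) * ((2 * m + 2) * (2 * m + 1))
      = ((2 * (k + 1)).choose (2 * m) : ℤ) * ((2 * k + 2 - 2 * m) * (2 * k + 1 - 2 * m)) := by
    have b1 := Nat.cast_choose_succ_right_eq (R := ℤ) (2 * (k + 1)) (2 * m)
    have b2 := Nat.cast_choose_succ_right_eq (R := ℤ) (2 * (k + 1)) (2 * m + 1)
    rw [show 2 * m + 1 + 1 = 2 * (m + 1) by ring] at b2
    push_cast at b1 b2 ⊢
    linear_combination (2 * (m : ℤ) + 1) * b2 + (2 * (k : ℤ) + 1 - 2 * m) * b1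
  have h3 : ((m : ℤ) + 1) * m.choose i = (m + 1).choose (i + 1) * (i + 1) := by
    exact_mod_cast Nat.add_one_mul_choose_eq m i
  have h4 : (m.choose (i + 1) : ℤ) * (i + 1) = m.choose i * (m - i) :=
    Nat.cast_choose_succ_right_eq m i
  set c : ℤ := ↑((2 * (k + 1)).choose (2 * m))
  have hK : ((i : ℤ) + 1) * ((2 * m + 2) * (2 * m + 1)) ≠ 0 := by positivity
  refine mul_left_cancel₀ hK ?_
  linear_combination
    ((i + 1 : ℤ) ^ 2 * (k + 1) * (m + 1).choose (i + 1)) * h1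
      - ((i + 1 : ℤ) ^ 2 * (k + 2) * (m + 1).choose (i + 1)) * h2
      - ((i + 1 : ℤ) * c * ((k + 1) * (2 * k + 4) * (2 * k + 3)
          - (k + 2) * (2 * k + 2 - 2 * m) * (2 * k + 1 - 2 * m))) * h3
      + ((k + 2 : ℤ) * (i + 1) * (2 * m + 2) * (2 * m + 1) * c) * h4

noncomputable def evenBinomSum {R : Type*} [CommRing R] (x y : R) (n i : ℕ) : R :=
  ∑ j ∈ range (n + 1), ((2 * n).choose (2 * j) * j.choose i : R) * x ^ (n - j) * y ^ (j - i)

section evenBinomSum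

variable {R : Type*} [CommRing R] (x y : R)

theorem evenBinomSum_zero_right (n i : ℕ) :
    evenBinomSum x 0 n i = (2 * n).choose (2 * i) * x ^ (n - i) := by
  rw [evenBinomSum, sum_eq_single i]
  · simp
  · intro j _ hji
    rcases lt_or_gt_of_ne hji with hlt | hgt
    · simp [Nat.choose_eq_zero_of_lt hlt]
    · simp [zero_pow (Nat.sub_ne_zero_of_lt hgt)]
  · intro hi
    simp [Nat.choose_eq_zero_of_lt (show 2 * n < 2 * i by grind)]

theorem evenBinomSum_eq_sum_Icc (n i : ℕ) :
    evenBinomSum x y n i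
      = ∑ j ∈ Icc i n, ((2 * n).choose (2 * j) * j.choose i : R) * x ^ (n - j) * y ^ (j - i) := by
  refine (sum_subset (fun j hj => ?_) fun j hj hji => ?_).symm
  · grind
  · simp [Nat.choose_eq_zero_of_lt (show j < i by grind)]

theorem evenBinomSum_recurrence (k i : ℕ) :
    ((i : R) + 1) * (k + 1) * evenBinomSum x y (k + 2) (i + 1)
      = ((i : R) + 1) * (k + 2) * (x - y) * evenBinomSum x y (k + 1) (i + 1)
        + ((k : R) + 2) * (2 * k + 2 - i) * evenBinomSum x y (k + 1) i := by
  have hL : evenBinomSum x y (k + 2) (i + 1) = ∑ m ∈ range (k + 2),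
      ((2 * (k + 2)).choose (2 * (m + 1)) * (m + 1).choose (i + 1) : R)
        * (x ^ (k + 1 - m) * y ^ (m - i)) := by
    rw [evenBinomSum, sum_range_succ']
    simp only [Nat.choose_zero_succ, Nat.cast_zero, mul_zero, zero_mul, add_zero]
    refine sum_congr rfl fun m _ => ?_
    rw [show k + 2 - (m + 1) = k + 1 - m by omega, Nat.add_sub_add_right]
    ring
  have hx : x * evenBinomSum x y (k + 1) (i + 1) = ∑ m ∈ range (k + 2),
      ((2 * (k + 1)).choose (2 * (m + 1)) * (m + 1).choose (i + 1) : R)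
        * (x ^ (k + 1 - m) * y ^ (m - i)) := by
    rw [evenBinomSum, sum_range_succ', sum_range_succ _ (k + 1),
      Nat.choose_eq_zero_of_lt (show 2 * (k + 1) < 2 * (k + 1 + 1) by omega)]
    simp only [Nat.choose_zero_succ, Nat.cast_zero, mul_zero, zero_mul, add_zero, mul_sum]
    refine sum_congr rfl fun m hm => ?_
    rw [show k + 1 - m = k - m + 1 by grind, pow_succ]
    simp only [Nat.add_sub_add_right]
    ring
  have hy : y * evenBinomSum x y (k + 1) (i + 1) = ∑ m ∈ range (k + 2),
      ((2 * (k + 1)).choose (2 * m) * m.choose (i + 1) : R) * (x ^ (k + 1 - m) * y ^ (m - i)) := by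
    rw [evenBinomSum, mul_sum]
    refine sum_congr rfl fun m _ => ?_
    rcases lt_or_ge m (i + 1) with hm | hm
    · simp [Nat.choose_eq_zero_of_lt hm]
    · rw [show m - i = m - (i + 1) + 1 by omega, pow_succ]
      ring
  have hT : evenBinomSum x y (k + 1) i = ∑ m ∈ range (k + 2),
      ((2 * (k + 1)).choose (2 * m) * m.choose i : R) * (x ^ (k + 1 - m) * y ^ (m - i)) :=
    sum_congr rfl fun m _ => by ring
  have hsum : ((i : R) + 1) * (k + 1) * evenBinomSum x y (k + 2) (i + 1)
      = ((i : R) + 1) * (k + 2)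
          * (x * evenBinomSum x y (k + 1) (i + 1) - y * evenBinomSum x y (k + 1) (i + 1))
        + ((k : R) + 2) * (2 * k + 2 - i) * evenBinomSum x y (k + 1) i := by
    rw [hL, hx, hy, hT, ← sum_sub_distrib]
    simp only [mul_sum, ← sum_add_distrib]
    refine sum_congr rfl fun m _ => ?_
    have hcoeff := congrArg (Int.cast (R := R)) (choose_mul_choose_recurrence k i m)
    push_cast at hcoeff
    linear_combination (x ^ (k + 1 - m) * y ^ (m - i)) * hcoeff
  linear_combination hsum

end evenBinomSum

theorem Qtilde_eq_evenBinomSum (n i : ℕ) (t : ℝ) :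
    Qtilde n i t
      = (evenBinomSum ((1 + t) ^ 2) 0 n i + evenBinomSum ((1 - t) ^ 2) (-4 * t) n i) / 2 := by
  have hS : ∑ j ∈ Icc i n, ((2 * n).choose (2 * j) * j.choose i : ℝ) * ((1 - t) ^ 2) ^ (n - j)
        * (-4 * t) ^ (j - i)
      = ∑ j ∈ Icc i n, ((2 * n).choose (2 * j) : ℝ) * (1 - t) ^ (2 * n - 2 * j) * (j.choose i : ℝ)
        * (-4 * t) ^ (j - i) :=
    sum_congr rfl fun j _ => by rw [← pow_mul, Nat.mul_sub]; ring
  rw [Qtilde, evenBinomSum_zero_right, evenBinomSum_eq_sum_Icc, hS, ← pow_mul, Nat.mul_sub]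
  ring

theorem stmt_14_general (k i : ℕ) (t : ℝ) :
    (1+(i:ℝ)) * (1+(k:ℝ)) * Qtilde (k+2) (i+1) t
      = (1+(i:ℝ)) * (2+(k:ℝ)) * (1+t)^2 * Qtilde (k+1) (i+1) t
        + (2+(k:ℝ)) * (2+2*(k:ℝ)-(i:ℝ)) * Qtilde (k+1) i t := by
  have hplus := evenBinomSum_recurrence ((1 + t) ^ 2) 0 k i
  have hminus := evenBinomSum_recurrence ((1 - t) ^ 2) (-4 * t) k i
  simp only [Qtilde_eq_evenBinomSum]
  linear_combination (hplus + hminus) / 2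

/-- For all integers `0 ≤ i ≤ k` and all real `t`,
`(1+i)(1+k) Q̃_{k+2,i+1}(t) = (1+i)(2+k)(1+t)² Q̃_{k+1,i+1}(t) + (2+k)(2+2k−i) Q̃_{k+1,i}(t)`. -/
theorem stmt_14 (k i : ℕ) (hik : i ≤ k) (t : ℝ) :
    (1+(i:ℝ)) * (1+(k:ℝ)) * Qtilde (k+2) (i+1) t
      = (1+(i:ℝ)) * (2+(k:ℝ)) * (1+t)^2 * Qtilde (k+1) (i+1) t
        + (2+(k:ℝ)) * (2+2*(k:ℝ)-(i:ℝ)) * Qtilde (k+1) i t :=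
  stmt_14_general k i t
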